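/- arXiv:2512.07008 — 2 statements merged into one kernel-verified Lean document; each statement's English description precedes it below -/
import Mathlib

section
/- For n ≥ 1, the sum of the semi-perimeters of the bargraphs of all Catalan words of length n equals (1/2)·(C(2n+2, n+1) − C(2n, n)). -/
def IsCatalanWord (w : List ℕ) : Prop :=
  (∀ x ∈ w, 0 < x) ∧ (0 < w.length → w.getD 0 0 = 1) ∧
    ∀ i, i + 1 < w.length → w.getD (i + 1) 0 ≤ w.getD i 0 + 1

/-- The perimeter of the bargraph of a word: 2·(length) horizontal edge length
(bottom plus top) plus the vertical edge lengths: the first column height, the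
last column height, and the absolute differences of consecutive heights. -/
def bargraphPerimeter (w : List ℕ) : ℕ :=
  2 * w.length + w.getD 0 0 + w.getD (w.length - 1) 0 +
    ∑ i ∈ Finset.range (w.length - 1), Nat.dist (w.getD i 0) (w.getD (i + 1) 0)

/-!
Store a Catalan word reversed, so that its last letter is the head of the list and the word
grows by consing a letter `x + 1` with `x ≤` the current last letter. The new column adds `1`
to the semiperimeter, plus `1` more when it is an ascent: the vertical boundary only grows when
the new column is higher than its predecessor, and then by exactly `2`.

For words of length `n`, count those whose last letter is at least `k`, and add up their
semiperimeters. Both tails have binomial closed forms, `catalanTail` and `semiperimeterTail`,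
which are checked by Pascal's rule against the recurrences the growth step induces (after an
Abel summation). At `k = 0` the second tail is the claimed total.
-/

open Finset

def IsRevCatalan : List ℕ → Prop
  | [] => True
  | x :: v => 1 ≤ x ∧ x ≤ v.headD 0 + 1 ∧ IsRevCatalan v

def revCatalanWords : ℕ → Finset (List ℕ)
  | 0 => {[]}
  | n + 1 => (revCatalanWords n).biUnion fun w =>
      (range (w.headD 0 + 1)).image fun x => (x + 1) :: w

def semiperimeter : List ℕ → ℕ
  | [] => 0
  | x :: v => semiperimeter v + 1 + if x = v.headD 0 + 1 then 1 else 0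

lemma mem_revCatalanWords {n : ℕ} {u : List ℕ} :
    u ∈ revCatalanWords n ↔ u.length = n ∧ IsRevCatalan u := by
  induction n generalizing u with
  | zero =>
    simp only [revCatalanWords, mem_singleton, List.length_eq_zero_iff, iff_self_and]
    rintro rfl
    trivial
  | succ n ih =>
    simp only [revCatalanWords, mem_biUnion, mem_image, mem_range]
    constructor
    · rintro ⟨w, hw, x, hx, rfl⟩
      obtain ⟨hlen, hw⟩ := ih.1 hw
      exact ⟨by simp [hlen], by omega, by omega, hw⟩
    · rintro ⟨hlen, hu⟩
      obtain _ | ⟨y, v⟩ := u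
      · simp at hlen
      obtain ⟨hy, hyv, hv⟩ := hu
      refine ⟨v, ih.2 ⟨by simpa using hlen, hv⟩, y - 1, by omega, ?_⟩
      rw [Nat.sub_add_cancel hy]

lemma sum_revCatalanWords_succ {M : Type*} [AddCommMonoid M] (n : ℕ) (g : List ℕ → M) :
    ∑ u ∈ revCatalanWords (n + 1), g u =
      ∑ w ∈ revCatalanWords n, ∑ x ∈ range (w.headD 0 + 1), g ((x + 1) :: w) := by
  rw [revCatalanWords, sum_biUnion]
  · refine sum_congr rfl fun w _ => sum_image fun a _ b _ h => by simpa using h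
  · intro v _ w _ hvw
    simp only [Function.onFun, disjoint_left, mem_image]
    rintro _ ⟨x, _, rfl⟩ ⟨y, _, h⟩
    exact hvw (List.cons.inj h).2.symm

lemma getD_reverse_length_sub_one {α : Type*} (v : List α) (d : α) :
    v.reverse.getD (v.length - 1) d = v.headD d := by
  cases v <;> simp

lemma isCatalanWord_append_singleton (l : List ℕ) (y : ℕ) :
    IsCatalanWord (l ++ [y]) ↔
      IsCatalanWord l ∧ 1 ≤ y ∧ y ≤ l.getD (l.length - 1) 0 + 1 := by
  rcases eq_or_ne l [] with rfl | hl
  · simp [IsCatalanWord]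
    omega
  have hm : 0 < l.length := List.length_pos_iff.2 hl
  have hlen : (l ++ [y]).length = l.length + 1 := by simp
  have get_l : ∀ i < l.length, (l ++ [y]).getD i 0 = l.getD i 0 := List.getD_append _ _ _
  have get_y : (l ++ [y]).getD l.length 0 = y := by simp
  constructor
  · rintro ⟨pos, first, step⟩
    refine ⟨⟨fun z hz => pos z (by simp [hz]), fun _ => ?_, fun i hi => ?_⟩, ?_, ?_⟩
    · rw [← get_l 0 hm]; exact first (by omega)
    · rw [← get_l i (by omega), ← get_l (i + 1) hi]; exact step i (by omega)
    · exact pos y (by simp)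
    · have := step (l.length - 1) (by omega)
      rwa [Nat.sub_add_cancel hm, get_y, get_l _ (by omega)] at this
  · rintro ⟨⟨pos, first, step⟩, hy, hyl⟩
    refine ⟨fun z hz => ?_, fun _ => ?_, fun i hi => ?_⟩
    · rcases List.mem_append.1 hz with h | h
      · exact pos z h
      · simp only [List.mem_singleton] at h; omega
    · rw [get_l 0 hm]; exact first hm
    · rw [hlen] at hi
      rcases Nat.lt_or_ge (i + 1) l.length with h | h
      · rw [get_l i (by omega), get_l (i + 1) h]; exact step i h
      · obtain rfl : i = l.length - 1 := by omega
        rwa [Nat.sub_add_cancel hm, get_y, get_l _ (by omega)]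

lemma isCatalanWord_reverse_iff (u : List ℕ) : IsCatalanWord u.reverse ↔ IsRevCatalan u := by
  induction u with
  | nil => simp [IsCatalanWord, IsRevCatalan]
  | cons y v ih =>
    rw [List.reverse_cons, isCatalanWord_append_singleton, ih, List.length_reverse,
      getD_reverse_length_sub_one, IsRevCatalan]
    tauto

lemma coe_image_reverse_revCatalanWords (n : ℕ) :
    ((revCatalanWords n).image List.reverse : Set (List ℕ)) =
      {w | IsCatalanWord w ∧ w.length = n} := by
  ext w
  rw [coe_image, Set.mem_image]
  constructor
  · rintro ⟨u, hu, rfl⟩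
    obtain ⟨hlen, hu⟩ := mem_revCatalanWords.1 hu
    exact ⟨(isCatalanWord_reverse_iff u).2 hu, by simp [hlen]⟩
  · rintro ⟨hw, hlen⟩
    refine ⟨w.reverse, mem_revCatalanWords.2 ⟨by simp [hlen], ?_⟩, w.reverse_reverse⟩
    rwa [← isCatalanWord_reverse_iff, List.reverse_reverse]

lemma bargraphPerimeter_append_singleton (l : List ℕ) (y : ℕ) :
    bargraphPerimeter (l ++ [y]) + l.getD (l.length - 1) 0 =
      bargraphPerimeter l + 2 + y + Nat.dist (l.getD (l.length - 1) 0) y := by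
  rcases eq_or_ne l [] with rfl | hl
  · simp [bargraphPerimeter, Nat.dist_zero_left]
  obtain ⟨m, hm⟩ := Nat.exists_eq_add_one_of_ne_zero (List.length_eq_zero_iff.not.2 hl)
  have get_l : ∀ i < l.length, (l ++ [y]).getD i 0 = l.getD i 0 := List.getD_append _ _ _
  have get_y : (l ++ [y]).getD (m + 1) 0 = y := by simp [← hm]
  have steps : ∀ i ∈ range m, ((l ++ [y]).getD i 0).dist ((l ++ [y]).getD (i + 1) 0) =
      (l.getD i 0).dist (l.getD (i + 1) 0) := fun i hi => by
    rw [mem_range] at hi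
    rw [get_l i (by omega), get_l (i + 1) (by omega)]
  simp only [bargraphPerimeter, List.length_append, List.length_singleton, hm,
    Nat.add_sub_cancel, sum_range_succ, sum_congr rfl steps, get_l 0 (by omega : 0 < l.length),
    get_l m (by omega), get_y]
  ring

lemma bargraphPerimeter_reverse {u : List ℕ} (hu : IsRevCatalan u) :
    bargraphPerimeter u.reverse = 2 * semiperimeter u := by
  induction u with
  | nil => rfl
  | cons y v ih =>
    obtain ⟨hy, hyv, hv⟩ := hu
    have h := bargraphPerimeter_append_singleton v.reverse y
    rw [List.length_reverse, getD_reverse_length_sub_one, ← List.reverse_cons, ih hv,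
      Nat.dist] at h
    rw [semiperimeter]
    split_ifs <;> omega

-- Guessed from the data; `catalanTail n k` counts the words of length `n` with last letter
-- `≥ k`, and `semiperimeterTail n k` (for `1 ≤ n`) is their total semiperimeter.
noncomputable def catalanTail (n k : ℕ) : ℚ :=
  (2 * n + 1 - k).choose (n + 1) - 2 * (2 * n - k).choose (n + 1)

noncomputable def semiperimeterTail (n k : ℕ) : ℚ :=
  k * (2 * (2 * n - k).choose n - (2 * n - k - 1).choose n) + (2 * n - k - 1).choose n +
    (2 * n - k).choose (n + 1)

lemma catalanTail_succ_succ_sub {n x : ℕ} (hx : x ≤ 2 * n) :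
    catalanTail (n + 1) (x + 1) - catalanTail (n + 1) (x + 2) = catalanTail n x := by
  obtain ⟨p, hp⟩ := Nat.exists_eq_add_of_le hx
  simp only [catalanTail, show 2 * (n + 1) + 1 - (x + 1) = p + 2 by omega,
    show 2 * (n + 1) - (x + 1) = p + 1 by omega, show 2 * (n + 1) + 1 - (x + 2) = p + 1 by omega,
    show 2 * (n + 1) - (x + 2) = p by omega, show 2 * n + 1 - x = p + 1 by omega,
    show 2 * n - x = p by omega, Nat.choose_succ_succ']
  push_cast
  ring

lemma catalanTail_succ_zero (n : ℕ) : catalanTail (n + 1) 0 = catalanTail (n + 1) 1 := by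
  have hsymm := Nat.choose_symm_half n
  simp only [catalanTail, show 2 * (n + 1) + 1 - 0 = 2 * n + 1 + 2 by omega,
    show 2 * (n + 1) - 0 = 2 * n + 1 + 1 by omega,
    show 2 * (n + 1) + 1 - 1 = 2 * n + 1 + 1 by omega,
    show 2 * (n + 1) - 1 = 2 * n + 1 by omega]
  generalize 2 * n + 1 = m at hsymm ⊢
  simp only [Nat.choose_succ_succ', hsymm]
  push_cast
  ring

lemma catalanTail_self_succ (n : ℕ) : catalanTail n (n + 1) = 0 := by
  simp [catalanTail, Nat.choose_eq_zero_of_lt, show 2 * n + 1 - (n + 1) = n by omega,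
    show 2 * n - (n + 1) < n + 1 by omega]

lemma semiperimeterTail_succ_succ_sub {n x : ℕ} (hx : x < 2 * n) :
    semiperimeterTail (n + 1) (x + 1) - semiperimeterTail (n + 1) (x + 2) =
      semiperimeterTail n x + 2 * catalanTail n x - catalanTail n (x + 1) := by
  obtain ⟨q, hq⟩ := Nat.exists_eq_add_of_lt hx
  obtain ⟨m, rfl⟩ : ∃ m, n = m + 1 := ⟨n - 1, by omega⟩
  rw [semiperimeterTail, semiperimeterTail, semiperimeterTail, catalanTail, catalanTail,
    show 2 * (m + 1 + 1) - (x + 1) - 1 = q + 1 by omega,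
    show 2 * (m + 1 + 1) - (x + 2) - 1 = q by omega,
    show 2 * (m + 1 + 1) - (x + 1) = q + 2 by omega,
    show 2 * (m + 1 + 1) - (x + 2) = q + 1 by omega,
    show 2 * (m + 1) - x - 1 = q by omega, show 2 * (m + 1) - x = q + 1 by omega,
    show 2 * (m + 1) + 1 - x = q + 2 by omega, show 2 * (m + 1) + 1 - (x + 1) = q + 1 by omega,
    show 2 * (m + 1) - (x + 1) = q by omega]
  simp only [Nat.choose_succ_succ']
  push_cast
  ring

lemma semiperimeterTail_succ_zero (n : ℕ) :
    semiperimeterTail (n + 1) 0 = semiperimeterTail (n + 1) 1 := by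
  rw [semiperimeterTail, semiperimeterTail, show 2 * (n + 1) - 0 - 1 = 2 * n + 1 by omega,
    show 2 * (n + 1) - 1 - 1 = 2 * n by omega, show 2 * (n + 1) - 0 = 2 * n + 2 by omega,
    show 2 * (n + 1) - 1 = 2 * n + 1 by omega]
  generalize 2 * n = m
  simp only [Nat.choose_succ_succ']
  push_cast
  ring

lemma semiperimeterTail_self_succ {n : ℕ} (hn : 1 ≤ n) : semiperimeterTail n (n + 1) = 0 := by
  simp [semiperimeterTail, Nat.choose_eq_zero_of_lt, show 2 * n - (n + 1) < n by omega,
    show 2 * n - (n + 1) - 1 < n by omega, show 2 * n - (n + 1) < n + 1 by omega]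

lemma semiperimeterTail_zero {n : ℕ} (hn : 1 ≤ n) :
    semiperimeterTail n 0 =
      1 / 2 * (((2 * n + 2).choose (n + 1) : ℚ) - (2 * n).choose n) := by
  obtain ⟨m, rfl⟩ : ∃ m, n = m + 1 := ⟨n - 1, by omega⟩
  have h₄ : (2 * m + 4).choose (m + 2) = 2 * (2 * m + 3).choose (m + 2) := by
    have h := Nat.choose_symm_half (m + 1)
    rw [show 2 * (m + 1) + 1 = 2 * m + 3 by ring] at h
    rw [Nat.choose_succ_succ', h]
    ring
  have h₃ : (2 * m + 3).choose (m + 2) =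
      (2 * m + 2).choose (m + 1) + (2 * m + 2).choose (m + 2) :=
    Nat.choose_succ_succ' _ _
  have h₂ : (2 * m + 2).choose (m + 1) = 2 * (2 * m + 1).choose (m + 1) := by
    rw [Nat.choose_succ_succ', Nat.choose_symm_half m]
    ring
  rw [semiperimeterTail, show 2 * (m + 1) - 0 - 1 = 2 * m + 1 by omega,
    show 2 * (m + 1) - 0 = 2 * m + 2 by omega, show 2 * (m + 1) + 2 = 2 * m + 4 by omega,
    show 2 * (m + 1) = 2 * m + 2 by omega, h₄, h₃, h₂]
  push_cast
  ring

lemma sum_range_sub_mul_sum_range {R : Type*} [CommRing R] (T f : ℕ → R) (n : ℕ) :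
    ∑ k ∈ range (n + 1), (T k - T (k + 1)) * ∑ x ∈ range (k + 1), f (x + 1) =
      ∑ x ∈ range (n + 1), (T x - T (n + 1)) * f (x + 1) := by
  induction n with
  | zero => simp
  | succ n ih =>
    rw [sum_range_succ, ih, sum_range_succ (fun x => f (x + 1)),
      sum_range_succ (fun x => (T x - T (n + 1 + 1)) * f (x + 1)), mul_add, mul_sum, ← add_assoc,
      ← sum_add_distrib]
    congr 1
    exact sum_congr rfl fun x _ => by ring

lemma sum_revCatalanWords_headD (n : ℕ) (f : ℕ → ℚ) :
    ∑ u ∈ revCatalanWords n, f (u.headD 0) =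
      ∑ k ∈ range (n + 1), (catalanTail n k - catalanTail n (k + 1)) * f k := by
  induction n generalizing f with
  | zero => norm_num [revCatalanWords, catalanTail]
  | succ n ih =>
    rw [sum_revCatalanWords_succ]
    simp only [List.headD_cons]
    rw [ih fun h => ∑ x ∈ range (h + 1), f (x + 1), sum_range_sub_mul_sum_range,
      catalanTail_self_succ, sum_range_succ' _ (n + 1),
      catalanTail_succ_zero, sub_self, zero_mul, add_zero]
    refine sum_congr rfl fun x hx => ?_
    rw [catalanTail_succ_succ_sub (by have := mem_range.1 hx; omega), sub_zero]

lemma sum_range_semiperimeter_cons_mul (w : List ℕ) (f : ℕ → ℚ) :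
    ∑ x ∈ range (w.headD 0 + 1), (semiperimeter ((x + 1) :: w) : ℚ) * f (x + 1) =
      (semiperimeter w + 1) * ∑ x ∈ range (w.headD 0 + 1), f (x + 1) + f (w.headD 0 + 1) := by
  have below_top : ∀ x ∈ range (w.headD 0),
      (semiperimeter ((x + 1) :: w) : ℚ) * f (x + 1) = (semiperimeter w + 1) * f (x + 1) :=
    fun x hx => by
      rw [mem_range] at hx
      rw [semiperimeter, if_neg (by omega)]
      push_cast
      ring
  rw [sum_range_succ, sum_congr rfl below_top, ← mul_sum, semiperimeter, if_pos rfl,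
    sum_range_succ (fun x => f (x + 1))]
  push_cast
  ring

lemma sum_revCatalanWords_semiperimeter_mul {n : ℕ} (hn : 1 ≤ n) (f : ℕ → ℚ) :
    ∑ u ∈ revCatalanWords n, (semiperimeter u : ℚ) * f (u.headD 0) =
      ∑ k ∈ range (n + 1), (semiperimeterTail n k - semiperimeterTail n (k + 1)) * f k := by
  induction n, hn using Nat.le_induction generalizing f with
  | base =>
    rw [show revCatalanWords 1 = {[1]} from rfl]
    norm_num [semiperimeter, semiperimeterTail, sum_range_succ]
  | succ n hn ih =>
    rw [sum_revCatalanWords_succ]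
    simp only [List.headD_cons, sum_range_semiperimeter_cons_mul, add_mul, one_mul,
      sum_add_distrib]
    rw [ih fun h => ∑ x ∈ range (h + 1), f (x + 1),
      sum_revCatalanWords_headD n fun h => ∑ x ∈ range (h + 1), f (x + 1),
      sum_revCatalanWords_headD n fun h => f (h + 1), sum_range_sub_mul_sum_range,
      sum_range_sub_mul_sum_range, semiperimeterTail_self_succ hn, catalanTail_self_succ,
      ← sum_add_distrib, ← sum_add_distrib, sum_range_succ' _ (n + 1),
      semiperimeterTail_succ_zero, sub_self, zero_mul, add_zero]
    refine sum_congr rfl fun x hx => ?_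
    rw [semiperimeterTail_succ_succ_sub (by have := mem_range.1 hx; omega)]
    ring

theorem total_semiperimeter (n : ℕ) (hn : 1 ≤ n) :
    ((∑ᶠ w ∈ {w : List ℕ | IsCatalanWord w ∧ w.length = n},
        bargraphPerimeter w / 2 : ℕ) : ℚ) =
      (1 / 2) * (((2 * n + 2).choose (n + 1) : ℚ) - ((2 * n).choose n : ℚ)) := by
  have half_perimeter : ∀ u ∈ revCatalanWords n,
      bargraphPerimeter u.reverse / 2 = semiperimeter u := fun u hu => by
      rw [bargraphPerimeter_reverse (mem_revCatalanWords.1 hu).2]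
      omega
  have total := sum_revCatalanWords_semiperimeter_mul hn fun _ => 1
  simp only [mul_one] at total
  rw [← coe_image_reverse_revCatalanWords, finsum_mem_coe_finset,
    sum_image fun _ _ _ _ h => List.reverse_injective h, sum_congr rfl half_perimeter, Nat.cast_sum,
    total, sum_range_sub', semiperimeterTail_self_succ hn, sub_zero, semiperimeterTail_zero hn]
end

section
/- For n ≥ 1, the sum over all Catalan words π of length n of (π_1 + π_2 + ... + π_n) equals (1/2)·(4^n − C(2n,n)). -/
/-!
A nonempty Catalan word factors uniquely at its first return to height `1` as `1 (u + 1) v`,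
with `u`, `v` Catalan words and `u + 1` the word `u` with every letter raised by one. Iterating
this decomposition identifies Catalan words of length `n` with binary trees on `n` nodes, and
the area of `1 (u + 1) v` is `area u + |u| + area v + 1`. Hence the total area `A n` satisfies
`A (n + 1) = ∑_{i+j=n} ((i + 1) C i C j + A i C j + C i A j)`, `C` the Catalan numbers, and
`2 A n + binom(2n, n) = 4 ^ n` follows by strong induction from the convolutions
`2 ∑_{i+j=n} binom(2i, i) C j = binom(2n+2, n+1)` and
`2 ∑_{i+j=n} 4 ^ i C j + binom(2n+2, n+1) = 4 ^ (n+1)`.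
-/

open Finset BinaryTree Nat

def CatalanStep (a b : ℕ) : Prop := 0 < b ∧ b ≤ a + 1

theorem pos_of_mem_of_isChain_catalanStep {a : ℕ} {w : List ℕ}
    (h : (a :: w).IsChain CatalanStep) : ∀ x ∈ w, 0 < x := by
  induction w generalizing a with
  | nil => simp
  | cons b w ih =>
    rw [List.isChain_cons_cons] at h
    rintro x (_ | ⟨_, hx⟩)
    · exact h.1.1
    · exact ih h.2 x hx

theorem isCatalanWord_iff_isChain {w : List ℕ} :
    IsCatalanWord w ↔ (0 :: w).IsChain CatalanStep := by
  constructor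
  · rintro ⟨hpos, hhead, hstep⟩
    refine List.isChain_iff_getElem.2 fun i hi => ?_
    simp only [List.length_cons] at hi
    cases i with
    | zero =>
      have h0 := hhead (by omega)
      rw [List.getD_eq_getElem _ _ (by omega)] at h0
      simp only [List.getElem_cons_zero, List.getElem_cons_succ, CatalanStep]
      exact ⟨hpos _ (List.getElem_mem _), by omega⟩
    | succ i =>
      have hi' := hstep i (by omega)
      rw [List.getD_eq_getElem _ _ (by omega), List.getD_eq_getElem _ _ (by omega)] at hi'
      simp only [List.getElem_cons_succ, CatalanStep]
      exact ⟨hpos _ (List.getElem_mem _), hi'⟩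
  · intro h
    have hstep := List.isChain_iff_getElem.1 h
    refine ⟨pos_of_mem_of_isChain_catalanStep h, fun hw => ?_, fun i hi => ?_⟩
    · have ⟨hpos, hle⟩ := hstep 0 (by simpa using hw)
      simp only [List.getElem_cons_zero, List.getElem_cons_succ] at hpos hle
      rw [List.getD_eq_getElem _ _ hw]
      omega
    · have := (hstep (i + 1) (by simpa using hi)).2
      rw [List.getD_eq_getElem _ _ hi, List.getD_eq_getElem _ _ (by omega)]
      simpa using this

def catalanCons (u v : List ℕ) : List ℕ := 1 :: (u.map (· + 1) ++ v)

/-- The first return of `w` to height `1` is its first letter after the head that is at most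
`1`. -/
def catalanUncons (w : List ℕ) : List ℕ × List ℕ :=
  ((w.tail.takeWhile (1 < ·)).map (· - 1), w.tail.dropWhile (1 < ·))

theorem isChain_catalanCons {u v : List ℕ} (hu : (0 :: u).IsChain CatalanStep)
    (hv : (0 :: v).IsChain CatalanStep) : (0 :: catalanCons u v).IsChain CatalanStep := by
  have hu' : (1 :: u.map (· + 1)).IsChain CatalanStep :=
    List.isChain_map_of_isChain (· + 1)
      (fun _ _ h => ⟨by omega, by unfold CatalanStep at h; omega⟩) hu
  obtain ⟨hv_head, hv⟩ := List.isChain_cons.1 hv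
  rw [catalanCons, List.isChain_cons_cons, ← List.cons_append]
  refine ⟨⟨one_pos, le_rfl⟩, hu'.append hv fun x _ y hy => ?_⟩
  have := hv_head y hy
  unfold CatalanStep at this ⊢
  omega

theorem catalanUncons_catalanCons {u v : List ℕ} (hu : ∀ x ∈ u, 0 < x)
    (hv : ∀ y ∈ v.head?, y ≤ 1) : catalanUncons (catalanCons u v) = (u, v) := by
  have hlift : ∀ x ∈ u.map (· + 1), decide (1 < x) = true := by simpa using hu
  have hv' : v.takeWhile (1 < ·) = [] ∧ v.dropWhile (1 < ·) = v := by
    cases v <;> simp_all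
  rw [catalanCons, catalanUncons, List.tail_cons, List.takeWhile_append_of_pos hlift,
    List.dropWhile_append_of_pos hlift, hv'.1, hv'.2]
  simp [Function.comp_def]

theorem catalanCons_catalanUncons {w : List ℕ} (h : (0 :: w).IsChain CatalanStep)
    (hw : w ≠ []) : catalanCons (catalanUncons w).1 (catalanUncons w).2 = w := by
  obtain ⟨a, t, rfl⟩ := List.exists_cons_of_ne_nil hw
  have ha : a = 1 := by have := (List.isChain_cons_cons.1 h).1; unfold CatalanStep at this; omega
  have hgt : ∀ x ∈ t.takeWhile (1 < ·), x - 1 + 1 = x := fun x hx => by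
    have := List.mem_takeWhile_imp hx
    simp only [decide_eq_true_eq] at this
    omega
  simp [catalanCons, catalanUncons, ha, Function.comp_def, List.map_congr_left hgt]

theorem isChain_catalanUncons {w : List ℕ} (h : (0 :: w).IsChain CatalanStep) :
    (0 :: (catalanUncons w).1).IsChain CatalanStep ∧
      (0 :: (catalanUncons w).2).IsChain CatalanStep := by
  cases w with
  | nil => simp [catalanUncons]
  | cons a t =>
    obtain ⟨⟨-, ha⟩, ht⟩ := List.isChain_cons_cons.1 h
    obtain rfl : a = 1 := by have := pos_of_mem_of_isChain_catalanStep h a (by simp); omega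
    have hpos := pos_of_mem_of_isChain_catalanStep ht
    simp only [catalanUncons, List.tail_cons]
    constructor
    · have hpre : (1 :: t.takeWhile (1 < ·)).IsChain CatalanStep :=
        ht.prefix ⟨t.dropWhile (1 < ·), by simp⟩
      rw [show 0 :: (t.takeWhile (1 < ·)).map (· - 1) = (1 :: t.takeWhile (1 < ·)).map (· - 1)
        from rfl, List.isChain_map]
      refine hpre.imp_of_mem_tail_imp fun a b ha hb hab => ?_
      have hb1 := List.mem_takeWhile_imp hb
      have ha1 : 1 ≤ a := by
        rcases List.mem_cons.1 ha with rfl | ha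
        · rfl
        · have := List.mem_takeWhile_imp ha
          simp only [decide_eq_true_eq] at this
          omega
      simp only [decide_eq_true_eq] at hb1
      unfold CatalanStep at hab ⊢
      omega
    · refine List.isChain_cons.2 ⟨fun y hy => ?_, ht.tail.suffix (List.dropWhile_suffix _)⟩
      have hy1 := List.head?_dropWhile_not (1 < ·) t
      rw [Option.mem_def.1 hy] at hy1
      have := hpos y ((List.dropWhile_suffix _).subset (List.mem_of_mem_head? hy))
      simp only [decide_eq_false_iff_not] at hy1
      exact ⟨this, by omega⟩

def toCatalanWord : BinaryTree Unit → List ℕ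
  | nil => []
  | node _ l r => catalanCons (toCatalanWord l) (toCatalanWord r)

theorem length_toCatalanWord (t : BinaryTree Unit) : (toCatalanWord t).length = t.numNodes := by
  induction t with
  | nil => rfl
  | node _ l r hl hr => simp [toCatalanWord, catalanCons, hl, hr]

theorem isChain_toCatalanWord (t : BinaryTree Unit) :
    (0 :: toCatalanWord t).IsChain CatalanStep := by
  induction t with
  | nil => exact .singleton 0
  | node _ l r hl hr => exact isChain_catalanCons hl hr

theorem catalanUncons_toCatalanWord_node (a : Unit) (l r : BinaryTree Unit) :
    catalanUncons (toCatalanWord (node a l r)) = (toCatalanWord l, toCatalanWord r) := by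
  have hr := List.isChain_cons.1 (isChain_toCatalanWord r)
  exact catalanUncons_catalanCons (pos_of_mem_of_isChain_catalanStep (isChain_toCatalanWord l))
    fun y hy => (hr.1 y hy).2

theorem toCatalanWord_injective : Function.Injective toCatalanWord := by
  intro s
  induction s with
  | nil =>
    rintro (_ | ⟨_, _, _⟩) h
    · rfl
    · exact absurd h.symm (List.cons_ne_nil _ _)
  | node _ l r hl hr =>
    rintro (_ | ⟨_, l', r'⟩) h
    · exact absurd h (List.cons_ne_nil _ _)
    · have := congrArg catalanUncons h
      simp only [catalanUncons_toCatalanWord_node, Prod.mk.injEq] at this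
      rw [hl this.1, hr this.2]

theorem exists_toCatalanWord_eq {w : List ℕ} (h : (0 :: w).IsChain CatalanStep) :
    ∃ t, toCatalanWord t = w := by
  induction hn : w.length using Nat.strong_induction_on generalizing w with
  | _ n ih =>
    rcases eq_or_ne w [] with rfl | hw
    · exact ⟨nil, rfl⟩
    have hcons := catalanCons_catalanUncons h hw
    have hlen := congrArg List.length hcons
    simp only [catalanCons, List.length_cons, List.length_append, List.length_map] at hlen
    obtain ⟨hu, hv⟩ := isChain_catalanUncons h
    obtain ⟨l, hl⟩ := ih _ (by omega) hu rfl
    obtain ⟨r, hr⟩ := ih _ (by omega) hv rfl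
    exact ⟨l △ r, by rw [← hcons, ← hl, ← hr]; rfl⟩

theorem coe_image_toCatalanWord (n : ℕ) :
    ((treesOfNumNodesEq n).image toCatalanWord : Set (List ℕ)) =
      {w | IsCatalanWord w ∧ w.length = n} := by
  ext w
  simp only [coe_image, coe_treesOfNumNodesEq, Set.mem_image, Set.mem_ofPred_eq,
    isCatalanWord_iff_isChain]
  constructor
  · rintro ⟨t, rfl, rfl⟩
    exact ⟨isChain_toCatalanWord t, length_toCatalanWord t⟩
  · rintro ⟨h, rfl⟩
    obtain ⟨t, rfl⟩ := exists_toCatalanWord_eq h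
    exact ⟨t, (length_toCatalanWord t).symm, rfl⟩

theorem sum_treesOfNumNodesEq_succ {M : Type*} [AddCommMonoid M] (f : BinaryTree Unit → M)
    (n : ℕ) : ∑ t ∈ treesOfNumNodesEq (n + 1), f t =
      ∑ ij ∈ antidiagonal n,
        ∑ l ∈ treesOfNumNodesEq ij.1, ∑ r ∈ treesOfNumNodesEq ij.2, f (l △ r) := by
  rw [treesOfNumNodesEq_succ, sum_biUnion]
  · simp [sum_product]
    rfl
  · simp_rw [Set.PairwiseDisjoint, Set.Pairwise, disjoint_left]
    aesop

theorem sum_catalanCons (u v : List ℕ) :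
    (catalanCons u v).sum = u.sum + u.length + v.sum + 1 := by
  simp [catalanCons, List.sum_map_add]
  ring

def totalArea (n : ℕ) : ℕ := ∑ t ∈ treesOfNumNodesEq n, (toCatalanWord t).sum

theorem totalArea_succ (n : ℕ) : totalArea (n + 1) = ∑ ij ∈ antidiagonal n,
    ((ij.1 + 1) * (catalan ij.1 * catalan ij.2) + totalArea ij.1 * catalan ij.2 +
      catalan ij.1 * totalArea ij.2) := by
  rw [totalArea, sum_treesOfNumNodesEq_succ]
  refine sum_congr rfl fun ij _ => ?_
  have hsum : ∀ l ∈ treesOfNumNodesEq ij.1, ∀ r, (toCatalanWord (l △ r)).sum =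
      (toCatalanWord l).sum + ij.1 + (toCatalanWord r).sum + 1 := fun l hl r => by
    rw [toCatalanWord, sum_catalanCons, length_toCatalanWord, mem_treesOfNumNodesEq.1 hl]
  rw [sum_congr rfl fun l hl => sum_congr rfl fun r _ => hsum l hl r]
  simp only [sum_add_distrib, sum_const, treesOfNumNodesEq_card_eq_catalan, smul_eq_mul,
    ← mul_sum, totalArea]
  ring

theorem centralBinom_succ_add_two_mul_catalan (n : ℕ) :
    centralBinom (n + 1) + 2 * catalan n = 4 * centralBinom n := by
  have h1 := succ_mul_centralBinom_succ n
  have h2 := succ_mul_catalan_eq_centralBinom n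
  apply Nat.eq_of_mul_eq_mul_left n.succ_pos
  ring_nf at h1 h2 ⊢
  linarith

theorem two_mul_sum_centralBinom_mul_catalan (n : ℕ) :
    2 * ∑ ij ∈ antidiagonal n, centralBinom ij.1 * catalan ij.2 = centralBinom (n + 1) := by
  induction n with
  | zero => simp [centralBinom_eq_two_mul_choose]
  | succ n ih =>
    have hstep : ∑ ij ∈ antidiagonal n, centralBinom (ij.1 + 1) * catalan ij.2 +
        2 * catalan (n + 1) = 4 * ∑ ij ∈ antidiagonal n, centralBinom ij.1 * catalan ij.2 := by
      rw [catalan_succ', mul_sum, mul_sum, ← sum_add_distrib]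
      refine sum_congr rfl fun ij _ => ?_
      calc _ = (centralBinom (ij.1 + 1) + 2 * catalan ij.1) * catalan ij.2 := by ring
        _ = _ := by rw [centralBinom_succ_add_two_mul_catalan]; ring
    rw [sum_antidiagonal_succ]
    have := centralBinom_succ_add_two_mul_catalan (n + 1)
    simp only [centralBinom_zero, one_mul]
    omega

theorem two_mul_sum_four_pow_mul_catalan_add_centralBinom (n : ℕ) :
    2 * ∑ ij ∈ antidiagonal n, 4 ^ ij.1 * catalan ij.2 + centralBinom (n + 1) =
      4 ^ (n + 1) := by
  induction n with
  | zero => simp [centralBinom_eq_two_mul_choose]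
  | succ n ih =>
    have hshift : ∑ ij ∈ antidiagonal n, 4 ^ (ij.1 + 1) * catalan ij.2 =
        4 * ∑ ij ∈ antidiagonal n, 4 ^ ij.1 * catalan ij.2 := by
      rw [mul_sum]
      exact sum_congr rfl fun _ _ => by ring
    rw [sum_antidiagonal_succ, hshift]
    simp only [pow_zero, one_mul]
    have := centralBinom_succ_add_two_mul_catalan (n + 1)
    rw [pow_succ] at ih ⊢
    omega

theorem two_mul_sum_succ_mul_catalan_mul_catalan (n : ℕ) :
    2 * ∑ ij ∈ antidiagonal n, (ij.1 + 1) * (catalan ij.1 * catalan ij.2) =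
      centralBinom (n + 1) := by
  calc 2 * ∑ ij ∈ antidiagonal n, (ij.1 + 1) * (catalan ij.1 * catalan ij.2)
      = ∑ ij ∈ antidiagonal n, ((ij.1 + 1) * (catalan ij.1 * catalan ij.2) +
          (ij.2 + 1) * (catalan ij.2 * catalan ij.1)) := by
        rw [two_mul, sum_add_distrib, ← sum_antidiagonal_swap (f := fun ij =>
          (ij.1 + 1) * (catalan ij.1 * catalan ij.2))]
        rfl
    _ = ∑ ij ∈ antidiagonal n, (n + 2) * (catalan ij.1 * catalan ij.2) := by
        refine sum_congr rfl fun ij hij => ?_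
        rw [← mem_antidiagonal.1 hij]
        ring
    _ = centralBinom (n + 1) := by
        rw [← mul_sum, ← catalan_succ', ← succ_mul_catalan_eq_centralBinom]

theorem two_mul_totalArea_add_centralBinom (n : ℕ) :
    2 * totalArea n + centralBinom n = 4 ^ n := by
  induction n using Nat.strong_induction_on with
  | _ n ih =>
    rcases n with _ | n
    · simp [totalArea, toCatalanWord]
    have hswap : ∑ ij ∈ antidiagonal n, catalan ij.1 * totalArea ij.2 =
        ∑ ij ∈ antidiagonal n, totalArea ij.1 * catalan ij.2 := by
      rw [← sum_antidiagonal_swap]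
      simp [mul_comm]
    have hih : 2 * ∑ ij ∈ antidiagonal n, totalArea ij.1 * catalan ij.2 +
        ∑ ij ∈ antidiagonal n, centralBinom ij.1 * catalan ij.2 =
          ∑ ij ∈ antidiagonal n, 4 ^ ij.1 * catalan ij.2 := by
      rw [mul_sum, ← sum_add_distrib]
      refine sum_congr rfl fun ij hij => ?_
      rw [← ih ij.1 (by have := mem_antidiagonal.1 hij; omega)]
      ring
    rw [totalArea_succ, sum_add_distrib, sum_add_distrib, hswap]
    have := two_mul_sum_centralBinom_mul_catalan n
    have := two_mul_sum_four_pow_mul_catalan_add_centralBinom n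
    have := two_mul_sum_succ_mul_catalan_mul_catalan n
    omega

theorem total_area_general (n : ℕ) :
    ((∑ᶠ w ∈ {w : List ℕ | IsCatalanWord w ∧ w.length = n}, w.sum : ℕ) : ℚ) =
      (1 / 2) * ((4 : ℚ) ^ n - ((2 * n).choose n : ℚ)) := by
  rw [← coe_image_toCatalanWord, finsum_mem_coe_finset,
    sum_image fun s _ t _ h => toCatalanWord_injective h, ← totalArea]
  have h : (2 * totalArea n + (2 * n).choose n : ℚ) = 4 ^ n := by
    exact_mod_cast centralBinom_eq_two_mul_choose n ▸ two_mul_totalArea_add_centralBinom n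
  linarith

theorem total_area (n : ℕ) (hn : 1 ≤ n) :
    ((∑ᶠ w ∈ {w : List ℕ | IsCatalanWord w ∧ w.length = n}, w.sum : ℕ) : ℚ) =
      (1 / 2) * ((4 : ℚ) ^ n - ((2 * n).choose n : ℚ)) :=
  total_area_general n
end
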